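/- arXiv:1602.06779 — 2 statements merged into one kernel-verified Lean document; each statement's English description precedes it below -/
import Mathlib

section
/- Let E and F be groups, with F a free group of finite rank. If f : E → F is a surjective group homomorphism and the rank of E (minimal cardinality of a generating set) equals the rank of F, then f is an isomorphism. -/
/-
Free groups are residually finite: for a reduced word `w` of length `k`, let each generator `i`
act on the path `0, 1, …, k` by a permutation extending the partial injection that moves along
the edges labelled by the letters `i^{±1}` of `w`; reducedness is exactly what makes these partial
maps injective, and then `w` carries the endpoint `k` to `0`. A finitely generated residually
finite group `G` is Hopfian: for a surjection `φ : G → G`, precomposition with `φ` is an injective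
self-map of the finite set `Hom(G, Q)` for every finite quotient `Q`, hence bijective, so every
such quotient map factors through `φ` and kills `ker φ`. Counting homomorphisms to `ℤ/2` shows
that the free group on `n` letters has rank `n`. Finally, if `S` generates `E` with `|S| = rank E`,
then `FreeGroup S → E → F ≃ FreeGroup S` is a surjective endomorphism, hence injective, and so
is `f`.
-/

open Function Equiv

theorem Equiv.Perm.prod_map_apply_last_of_chain {α β : Type*} (F : β → Perm α) (L : List β)
    (p : Fin (L.length + 1) → α) (h : ∀ j : Fin L.length, F L[j] (p j.succ) = p j.castSucc) :
    (L.map F).prod (p (Fin.last _)) = p 0 := by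
  induction L with
  | nil => rfl
  | cons b L ih =>
    have step := ih (p ∘ Fin.succ) fun j => h j.succ
    simp only [List.map_cons, List.prod_cons, Perm.mul_apply]
    simpa [Fin.succ_last] using (congrArg (F b) step).trans (h 0)

namespace FreeGroup

variable {ι : Type*}

theorem IsReduced.snd_eq_of_fst_eq {L : List (ι × Bool)} (hL : IsReduced L) {j : ℕ}
    (hj : j + 1 < L.length) (h : L[j].1 = L[j + 1].1) : L[j].2 = L[j + 1].2 :=
  List.IsChain.getElem hL j hj h

/-- `letterEnd L true j ↦ letterEnd L false j` is the edge that the letter `L[j]` contributes to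
the action of its generator: `j + 1 ↦ j` for a positive letter, `j ↦ j + 1` for a negative one. -/
def letterEnd (L : List (ι × Bool)) (c : Bool) (j : Fin L.length) : Fin (L.length + 1) :=
  if L[j].2 = c then j.succ else j.castSucc

theorem IsReduced.letterEnd_injOn {L : List (ι × Bool)} (hL : IsReduced L) (c : Bool) (i : ι) :
    Set.InjOn (letterEnd L c) {j | L[j].1 = i} := by
  have hne_of_lt : ∀ j j' : Fin L.length, j < j' → L[j].1 = i → L[j'].1 = i →
      letterEnd L c j ≠ letterEnd L c j' := by
    intro j j' hlt hj hj' heq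
    have hval := congrArg Fin.val heq
    simp only [letterEnd] at hval
    split_ifs at hval with h1 h2 h2 <;> simp only [Fin.val_succ, Fin.val_castSucc] at hval
    · omega
    · have hj1 : j.val + 1 < L.length := by omega
      obtain rfl : j' = ⟨j + 1, hj1⟩ := Fin.ext hval.symm
      exact h2 (h1 ▸ (hL.snd_eq_of_fst_eq _ (hj.trans hj'.symm)).symm)
    · omega
    · omega
  intro j hj j' hj' heq
  rcases lt_trichotomy j j' with hlt | rfl | hlt
  · exact absurd heq (hne_of_lt j j' hlt hj hj')
  · rfl
  · exact absurd heq.symm (hne_of_lt j' j hlt hj' hj)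

theorem IsReduced.exists_lift_mk_apply_last_eq_zero {L : List (ι × Bool)} (hL : IsReduced L) :
    ∃ σ : ι → Perm (Fin (L.length + 1)), lift σ (mk L) (Fin.last _) = 0 := by
  choose σ hσ using fun i => Perm.exists_extending_pair
    (Set.domRestrict {j | L[j].1 = i} (letterEnd L true))
    (Set.domRestrict {j | L[j].1 = i} (letterEnd L false))
    (hL.letterEnd_injOn true i).injective (hL.letterEnd_injOn false i).injective
  refine ⟨σ, ?_⟩
  rw [lift_mk]
  refine Perm.prod_map_apply_last_of_chain _ L id fun j => ?_
  have hj := hσ L[j].1 ⟨j, rfl⟩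
  simp only [Set.domRestrict_apply, letterEnd] at hj
  cases hb : L[j].2 <;> simp only [hb, Bool.false_eq_true, Bool.true_eq_false, if_true,
    if_false, cond_true, cond_false, id] at hj ⊢
  · exact Perm.inv_eq_iff_eq.mpr hj.symm
  · exact hj

instance : Group.ResiduallyFinite (FreeGroup ι) := by
  classical
  refine Group.residuallyFinite_of_forall_exists_finite_monoidHom fun w hw => ?_
  obtain ⟨σ, hσ⟩ := (isReduced_toWord (x := w)).exists_lift_mk_apply_last_eq_zero
  refine ⟨_, inferInstance, inferInstance, lift σ, fun h => ?_⟩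
  rw [mk_toWord, h, Perm.one_apply, Fin.last_eq_zero_iff] at hσ
  exact hw (toWord_eq_nil_iff.mp (List.length_eq_zero_iff.mp hσ))

end FreeGroup

section

variable {G Q : Type*} [Group G] [Group Q]

theorem MonoidHom.domRestrict_injective_of_closure_eq_top {s : Set G}
    (hs : Subgroup.closure s = ⊤) : Injective fun χ : G →* Q => s.domRestrict χ :=
  fun _ _ h => MonoidHom.eq_of_eqOn_dense hs fun x hx => congrFun h ⟨x, hx⟩

instance [Group.FG G] [Finite Q] : Finite (G →* Q) := by
  obtain ⟨S, hS⟩ := Group.FG.out (G := G)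
  exact Finite.of_injective _ (MonoidHom.domRestrict_injective_of_closure_eq_top (Q := Q) hS)

theorem Group.nat_card_monoidHom_le_pow_rank [Group.FG G] [Finite Q] :
    Nat.card (G →* Q) ≤ Nat.card Q ^ Group.rank G := by
  obtain ⟨S, hS_card, hS⟩ := Group.rank_spec G
  calc Nat.card (G →* Q) ≤ Nat.card (↥(S : Set G) → Q) :=
        Nat.card_le_card_of_injective _ (MonoidHom.domRestrict_injective_of_closure_eq_top hS)
    _ = Nat.card Q ^ Group.rank G := by simp [Nat.card_fun, hS_card]

theorem Group.ResiduallyFinite.injective_of_surjective [Group.FG G] [Group.ResiduallyFinite G]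
    {φ : G →* G} (hφ : Surjective φ) : Injective φ := by
  refine (injective_iff_map_eq_one φ).mpr fun w hw => by_contra fun hw1 => ?_
  obtain ⟨H, hwH⟩ := Group.exists_finiteIndexNormalSubgroup_notMem w hw1
  have hcomp : Surjective fun χ : G →* G ⧸ H.toSubgroup => χ.comp φ :=
    Finite.surjective_of_injective fun _ _ h => (MonoidHom.cancel_right hφ).mp h
  obtain ⟨χ, hχ⟩ := hcomp (QuotientGroup.mk' H.toSubgroup)
  have : (w : G ⧸ H.toSubgroup) = 1 := by
    rw [← QuotientGroup.mk'_apply, ← hχ, MonoidHom.comp_apply, hw, map_one]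
  exact hwH ((QuotientGroup.eq_one_iff w).mp this)

end

theorem FreeGroup.rank_eq_nat_card (α : Type*) [Finite α] :
    Group.rank (FreeGroup α) = Nat.card α := by
  classical
  have := Fintype.ofFinite α
  apply le_antisymm
  · calc Group.rank (FreeGroup α) ≤ (Finset.univ.image of).card :=
          Group.rank_le (by simp [Set.image_univ, closure_range_of])
      _ ≤ Nat.card α := by simpa using Finset.card_image_le (s := Finset.univ) (f := of)
  · have h := Group.nat_card_monoidHom_le_pow_rank (G := FreeGroup α) (Q := Multiplicative (ZMod 2))
    rw [← Nat.card_congr FreeGroup.lift, Nat.card_fun] at h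
    exact (Nat.pow_le_pow_iff_right one_lt_two).mp (by simpa using h)

/-- A surjective homomorphism from a group `E` onto a free group `F`
of finite rank with `rank E = rank F` is an isomorphism. -/
theorem stmt_1 (E F : Type) [Group E] [Group F] [Group.FG E] [Group.FG F]
    [IsFreeGroup F] [Finite (IsFreeGroup.Generators F)]
    (f : E →* F) (hf : Function.Surjective f)
    (hrank : Group.rank E = Group.rank F) :
    Function.Bijective f := by
  obtain ⟨S, hS_card, hS⟩ := Group.rank_spec E
  set ρ : FreeGroup S →* E := FreeGroup.lift Subtype.val
  have hρ : Surjective ρ :=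
    FreeGroup.lift_surjective_iff_closure_range_eq_top.mpr (by simpa using hS)
  obtain ⟨e⟩ : Nonempty (S ≃ IsFreeGroup.Generators F) := Finite.card_eq.mp <| by
    rw [Nat.card_eq_finsetCard, hS_card, hrank, Group.rank_congr (IsFreeGroup.toFreeGroup F),
      FreeGroup.rank_eq_nat_card]
  let θ : F ≃* FreeGroup S := (IsFreeGroup.toFreeGroup F).trans (FreeGroup.freeGroupCongr e.symm)
  have hθfρ : Injective (θ.toMonoidHom.comp (f.comp ρ)) :=
    Group.ResiduallyFinite.injective_of_surjective (θ.surjective.comp (hf.comp hρ))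
  have hfρ : Injective (f ∘ ρ) := (θ.injective.of_comp_iff _).mp hθfρ
  exact ⟨hfρ.of_comp_right hρ, hf⟩
end

section
/- Let f : A → B be a group homomorphism between finitely generated residually finite groups that induces an isomorphism of profinite completions. Then the induced map f_* : A_ab → B_ab on abelianizations is an isomorphism. -/
open Function

/-- Index set for the inverse system: finite-index normal subgroups. -/
def FinNormalSub (G : Type) [Group G] : Type := {N : Subgroup G // N.Normal ∧ N.FiniteIndex}

instance {G : Type} [Group G] (N : FinNormalSub G) : N.1.Normal := N.2.1
instance {G : Type} [Group G] (N : FinNormalSub G) : N.1.FiniteIndex := N.2.2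

/-- The subgroup of compatible families in the product of all finite quotients. -/
def profC (G : Type) [Group G] : Subgroup (∀ N : FinNormalSub G, G ⧸ N.1) where
  carrier := {x | ∀ (N M : FinNormalSub G) (h : N.1 ≤ M.1),
      QuotientGroup.map N.1 M.1 (MonoidHom.id G) (by simpa using h) (x N) = x M}
  one_mem' := by intro N M h; simp
  mul_mem' := by intro a b ha hb N M h; simp [ha N M h, hb N M h]
  inv_mem' := by intro a ha N M h; simp [ha N M h]

/-- The profinite completion of a group, as the inverse limit of its finite quotients. -/
abbrev ProfiniteCompletion (G : Type) [Group G] : Type := ↥(profC G)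

/-- The canonical map of a group into its profinite completion. -/
def toProf (G : Type) [Group G] : G →* ProfiniteCompletion G where
  toFun g := ⟨fun N => QuotientGroup.mk g, by intro N M h; simp⟩
  map_one' := by refine Subtype.ext (funext fun N => ?_); simp
  map_mul' := by intro a b; refine Subtype.ext (funext fun N => ?_); rfl

lemma finiteIndex_comap {G H : Type} [Group G] [Group H] (f : G →* H)
    (M : Subgroup H) [M.Normal] [M.FiniteIndex] : (M.comap f).FiniteIndex := by
  constructor
  rw [Subgroup.index_comap]
  intro h0
  have hdvd := Subgroup.relIndex_dvd_index_of_normal (H := M) (K := f.range)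
  rw [h0] at hdvd
  exact Subgroup.FiniteIndex.index_ne_zero (zero_dvd_iff.mp hdvd)
/-- Pull back a finite-index normal subgroup along a homomorphism. -/
def pullFNS {G H : Type} [Group G] [Group H] (f : G →* H) (M : FinNormalSub H) :
    FinNormalSub G :=
  ⟨M.1.comap f, ⟨Subgroup.normal_comap f, finiteIndex_comap f M.1⟩⟩

/-- The homomorphism of profinite completions induced by a group homomorphism. -/
def profMap {G H : Type} [Group G] [Group H] (f : G →* H) :
    ProfiniteCompletion G →* ProfiniteCompletion H where
  toFun x := ⟨fun M => QuotientGroup.map (M.1.comap f) M.1 f le_rfl (x.1 (pullFNS f M)), by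
    intro M M' h
    have hc : (pullFNS f M).1 ≤ (pullFNS f M').1 := Subgroup.comap_mono h
    beta_reduce
    rw [← x.2 (pullFNS f M) (pullFNS f M') hc]
    generalize x.1 (pullFNS f M) = y
    induction y using QuotientGroup.induction_on with
    | H g => rfl⟩
  map_one' := by refine Subtype.ext (funext fun M => ?_); exact map_one _
  map_mul' := by
    intro a b
    refine Subtype.ext (funext fun M => ?_)
    exact map_mul _ _ _

/-!
Since `profMap f` is surjective, `f` hits every coset of every finite quotient of `B`, so two
maps `B → Q` to a finite group that agree on the image of `f` are equal; since `profMap f` is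
bijective, every map `A → Q` extends to `Â ≅ B̂` through a finite quotient and restricts to
`B`.
Hence restriction along `f` is a bijection `Hom(B, Q) ≃ Hom(A, Q)` for every finite `Q`; for
abelian `Q` these are the maps out of the abelianizations. Finitely generated abelian groups are
residually finite (by the structure theorem), and a homomorphism `g` between them that induces
such bijections is injective (separate a kernel element in a finite quotient of the source) and
surjective (separate a non-image element in a finite quotient of the cokernel).
-/

open scoped DirectSum

namespace Group

variable {G G' : Type*} [Group G] [Group G']

@[to_additive]
theorem ResiduallyFinite.of_injective [ResiduallyFinite G'] (f : G →* G') (hf : Injective f) :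
    ResiduallyFinite G := by
  rw [residuallyFinite_iff_forall_finiteIndexNormalSubgroup]
  intro g hg
  exact hf <| (eq_one_iff_forall_finiteIndexNormalSubroup (f g) fun K ↦ hg (K.comap f)).trans
    f.map_one.symm

@[to_additive]
instance ResiduallyFinite.pi {ι : Type*} {G : ι → Type*} [∀ i, Group (G i)]
    [∀ i, ResiduallyFinite (G i)] : ResiduallyFinite (∀ i, G i) := by
  rw [residuallyFinite_iff_forall_finiteIndexNormalSubgroup]
  intro g hg
  funext i
  exact eq_one_iff_forall_finiteIndexNormalSubroup (g i) fun K ↦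
    hg (K.comap (Pi.evalMonoidHom G i))

end Group

instance Int.addResiduallyFinite : AddGroup.ResiduallyFinite ℤ := by
  refine AddGroup.residuallyFinite_of_forall_exists_finite_addMonoidHom fun m hm ↦
    ⟨ZMod (m.natAbs + 1), inferInstance, inferInstance, Int.castAddHom _, ?_⟩
  rw [Int.coe_castAddHom, Ne, ZMod.intCast_zmod_eq_zero_iff_dvd]
  exact fun h ↦ hm (Int.eq_zero_of_dvd_of_natAbs_lt_natAbs h (by omega))

instance AddCommGroup.residuallyFinite_of_fg (M : Type*) [AddCommGroup M] [AddGroup.FG M] :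
    AddGroup.ResiduallyFinite M := by
  obtain ⟨n, ι, _, p, hp, e, ⟨F⟩⟩ := AddCommGroup.equiv_free_prod_directSum_zmod M
  have : ∀ i, NeZero (p i ^ e i) := fun i ↦ ⟨pow_ne_zero _ (hp i).ne_zero⟩
  have : Finite (⨁ i : ι, ZMod (p i ^ e i)) :=
    .of_equiv _ DFinsupp.equivFunOnFintype.symm
  have : AddGroup.ResiduallyFinite (Fin n →₀ ℤ) :=
    .of_injective Finsupp.coeFnAddHom DFunLike.coe_injective
  exact .of_injective F.toAddMonoidHom F.injective

instance CommGroup.residuallyFinite_of_fg (M : Type*) [CommGroup M] [Group.FG M] :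
    Group.ResiduallyFinite M := by
  refine Group.residuallyFinite_of_forall_exists_finite_monoidHom fun x hx ↦ ?_
  obtain ⟨H, hxH⟩ := AddGroup.exists_finiteIndexNormalAddSubgroup_notMem (Additive.ofMul x) hx
  refine ⟨Multiplicative (Additive M ⧸ H.toAddSubgroup), inferInstance, inferInstance,
    AddMonoidHom.toMultiplicativeRight (QuotientAddGroup.mk' H.toAddSubgroup), ?_⟩
  simp only [ne_eq, AddMonoidHom.coe_toMultiplicativeRight, comp_apply, ofAdd_eq_one,
    QuotientAddGroup.mk'_apply, QuotientAddGroup.eq_zero_iff]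
  exact hxH

section FiniteDuals

universe u

variable {M N : Type u}

theorem MonoidHom.injective_of_comp_surjective [CommGroup M] [Group.ResiduallyFinite M]
    [Group N] (g : M →* N)
    (hg : ∀ (Q : Type u) [CommGroup Q] [Finite Q], Surjective fun ψ : N →* Q ↦ ψ.comp g) :
    Injective g := by
  rw [injective_iff_map_eq_one]
  intro x hx
  by_contra hne
  obtain ⟨H, hxH⟩ := Group.exists_finiteIndexNormalSubgroup_notMem x hne
  obtain ⟨ψ, hψ⟩ := hg (M ⧸ H.toSubgroup) (QuotientGroup.mk' H.toSubgroup)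
  refine hxH ((QuotientGroup.eq_one_iff x).mp ?_)
  rw [← QuotientGroup.mk'_apply, ← hψ, MonoidHom.comp_apply, hx, map_one]

theorem MonoidHom.surjective_of_comp_injective [Group M] [CommGroup N] [Group.FG N] (g : M →* N)
    (hg : ∀ (Q : Type u) [CommGroup Q] [Finite Q], Injective fun ψ : N →* Q ↦ ψ.comp g) :
    Surjective g := by
  intro y
  by_contra hy
  have hy' : (y : N ⧸ g.range) ≠ 1 := by rwa [Ne, QuotientGroup.eq_one_iff]
  obtain ⟨H, hyH⟩ := Group.exists_finiteIndexNormalSubgroup_notMem _ hy'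
  let π := (QuotientGroup.mk' H.toSubgroup).comp (QuotientGroup.mk' g.range)
  have hπ : π.comp g = (1 : N →* _).comp g := by
    ext x
    have : (g x : N ⧸ g.range) = 1 :=
      (QuotientGroup.eq_one_iff (g x)).mpr (g.mem_range.mpr ⟨x, rfl⟩)
    simp [π, this]
  exact hyH <| (QuotientGroup.eq_one_iff _).mp <| DFunLike.congr_fun (hg _ hπ) y

end FiniteDuals

namespace Abelianization

instance fg (G : Type*) [Group G] [Group.FG G] : Group.FG (Abelianization G) :=
  inferInstanceAs (Group.FG (G ⧸ commutator G))

variable {G H : Type*} [Group G] [Group H] (f : G →* H) (Q : Type*) [CommGroup Q]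

theorem comp_map_eq_lift_comp :
    (fun ψ : Abelianization H →* Q ↦ ψ.comp (map f)) =
      lift ∘ (fun ψ : H →* Q ↦ ψ.comp f) ∘ lift.symm := by
  funext ψ
  apply hom_ext
  ext x
  simp

theorem comp_map_surjective_iff :
    Surjective (fun ψ : Abelianization H →* Q ↦ ψ.comp (map f)) ↔
      Surjective fun ψ : H →* Q ↦ ψ.comp f := by
  rw [comp_map_eq_lift_comp, Equiv.comp_surjective, Equiv.surjective_comp]

theorem comp_map_injective_iff :
    Injective (fun ψ : Abelianization H →* Q ↦ ψ.comp (map f)) ↔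
      Injective fun ψ : H →* Q ↦ ψ.comp f := by
  rw [comp_map_eq_lift_comp, Equiv.comp_injective, Equiv.injective_comp]

end Abelianization

def profProj (G : Type) [Group G] (N : FinNormalSub G) : ProfiniteCompletion G →* G ⧸ N.1 :=
  (Pi.evalMonoidHom _ N).comp (profC G).subtype

section Profinite

variable {A B : Type} [Group A] [Group B] (f : A →* B)

theorem profMap_toProf (a : A) : profMap f (toProf A a) = toProf B (f a) := rfl

theorem surjective_mk'_comp_of_surjective_profMap (hf : Surjective (profMap f))
    (N : Subgroup B) [N.Normal] [N.FiniteIndex] : Surjective ((QuotientGroup.mk' N).comp f) := by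
  let N' : FinNormalSub B := ⟨N, inferInstance, inferInstance⟩
  intro y
  obtain ⟨b, rfl⟩ := QuotientGroup.mk'_surjective N y
  obtain ⟨x, hx⟩ := hf (toProf B b)
  obtain ⟨a, ha⟩ := QuotientGroup.mk'_surjective _ (x.1 (pullFNS f N'))
  refine ⟨a, ?_⟩
  have hxN : QuotientGroup.map _ N f le_rfl (x.1 (pullFNS f N')) = b := congrArg (·.1 N') hx
  rw [← ha] at hxN
  exact hxN

theorem comp_injective_of_surjective_profMap (hf : Surjective (profMap f)) (Q : Type*)
    [Group Q] [Finite Q] : Injective fun ψ : B →* Q ↦ ψ.comp f := by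
  intro ψ₁ ψ₂ h
  let φ := ψ₁.prod ψ₂
  ext b
  obtain ⟨a, ha⟩ :=
    surjective_mk'_comp_of_surjective_profMap f hf φ.ker (QuotientGroup.mk' φ.ker b)
  have hφ : φ (f a) = φ b := by simpa using congrArg (QuotientGroup.kerLift φ) ha
  calc ψ₁ b = ψ₁ (f a) := (congrArg Prod.fst hφ).symm
    _ = ψ₂ (f a) := DFunLike.congr_fun h a
    _ = ψ₂ b := congrArg Prod.snd hφ

theorem comp_surjective_of_bijective_profMap (hf : Bijective (profMap f)) (Q : Type*)
    [Group Q] [Finite Q] : Surjective fun ψ : B →* Q ↦ ψ.comp f := by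
  intro φ
  let e := MulEquiv.ofBijective (profMap f) hf
  let N : FinNormalSub A := ⟨φ.ker, inferInstance, inferInstance⟩
  refine ⟨(QuotientGroup.kerLift φ).comp
    ((profProj A N).comp (e.symm.toMonoidHom.comp (toProf B))), ?_⟩
  ext a
  have he : e.symm (toProf B (f a)) = toProf A a := e.symm_apply_eq.mpr (profMap_toProf f a).symm
  simp only [MonoidHom.comp_apply, MulEquiv.coe_toMonoidHom, he]
  exact QuotientGroup.kerLift_mk φ a

end Profinite

theorem stmt_10_general (A B : Type) [Group A] [Group B] [Group.FG A] [Group.FG B]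
    (f : A →* B) (hf : Function.Bijective (profMap f)) :
    Function.Bijective (Abelianization.map f) :=
  ⟨(Abelianization.map f).injective_of_comp_surjective fun Q _ _ ↦
      (Abelianization.comp_map_surjective_iff f Q).mpr
        (comp_surjective_of_bijective_profMap f hf Q),
    (Abelianization.map f).surjective_of_comp_injective fun Q _ _ ↦
      (Abelianization.comp_map_injective_iff f Q).mpr
        (comp_injective_of_surjective_profMap f hf.2 Q)⟩

/-- If a homomorphism `f : A → B` between finitely generated
residually finite groups induces an isomorphism of profinite completions, then the
induced map on abelianizations is an isomorphism. -/
theorem stmt_10 (A B : Type) [Group A] [Group B] [Group.FG A] [Group.FG B]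
    (hresA : Function.Injective (toProf A)) (hresB : Function.Injective (toProf B))
    (f : A →* B) (hf : Function.Bijective (profMap f)) :
    Function.Bijective (Abelianization.map f) :=
  stmt_10_general A B f hf
end
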